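/- arXiv:1506.07544 — 3 statements merged into one kernel-verified Lean document; each statement's English description precedes it below -/
import Mathlib

section
/- A commutative ring R is locally stable if and only if the formal power series ring R[[X]] is locally stable. -/
/-- A commutative ring has stable range 1. -/
def HasStableRange1 (R : Type*) [CommRing R] : Prop :=
  ∀ a b : R, Ideal.span {a} ⊔ Ideal.span {b} = ⊤ → ∃ y : R, IsUnit (a + b * y)

/-- An element `a` is stable if `R/aR` has stable range 1. -/
def IsStableElem {R : Type*} [CommRing R] (a : R) : Prop :=
  HasStableRange1 (R ⧸ Ideal.span {a})

/-- A commutative ring is locally stable. -/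
def LocallyStable (R : Type*) [CommRing R] : Prop :=
  ∀ a b : R, Ideal.span {a} ⊔ Ideal.span {b} = ⊤ →
    ∃ y : R, HasStableRange1 (R ⧸ Ideal.span {a + b * y})

/-- A clean ring: every element is the sum of an idempotent and a unit. -/
def IsCleanRing (R : Type*) [CommRing R] : Prop :=
  ∀ a : R, ∃ e u : R, IsIdempotentElem e ∧ IsUnit u ∧ a = e + u

/-- A ring has neat range 1. -/
def NeatRange1 (R : Type*) [CommRing R] : Prop :=
  ∀ a b : R, Ideal.span {a} ⊔ Ideal.span {b} = ⊤ →
    ∃ y : R, IsCleanRing (R ⧸ Ideal.span {a + b * y})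

/-- A ring has almost stable range 1: every proper homomorphic image has stable range 1. -/
def AlmostStableRange1 (R : Type*) [CommRing R] : Prop :=
  ∀ I : Ideal R, I ≠ ⊥ → HasStableRange1 (R ⧸ I)

/-- An elementary divisor ring: every rectangular matrix admits diagonal reduction. -/
def ElementaryDivisorRing (R : Type*) [CommRing R] : Prop :=
  ∀ (m n : ℕ) (A : Matrix (Fin m) (Fin n) R),
    ∃ (P : Matrix (Fin m) (Fin m) R) (Q : Matrix (Fin n) (Fin n) R),
      IsUnit P ∧ IsUnit Q ∧
      (∀ (i : Fin m) (j : Fin n), (i : ℕ) ≠ (j : ℕ) → (P * A * Q) i j = 0) ∧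
      (∀ (i i' : Fin m) (j j' : Fin n), (i : ℕ) = (j : ℕ) → (i' : ℕ) = (j' : ℕ) →
        (i' : ℕ) = (i : ℕ) + 1 → (P * A * Q) i j ∣ (P * A * Q) i' j')

/-- A ring is strongly completable. -/
def StronglyCompletable (R : Type*) [CommRing R] : Prop :=
  ∀ (n : ℕ) (hn : 0 < n) (a : Fin n → R) (d : R),
    (⨆ i, Ideal.span {a i}) = Ideal.span {d} →
    ∃ A : Matrix (Fin n) (Fin n) R, (∀ j, A ⟨0, hn⟩ j = a j) ∧ A.det = d


/-!
Evaluation at `0` is a surjection `R⟦X⟧ → R` whose kernel lies in the Jacobson radical. Along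
such a surjection `f : S → T`, comaximal pairs lift and units are reflected, and the same holds
for the induced maps `S ⧸ (x) → T ⧸ (f x)`; hence `S ⧸ (x)` has stable range 1 iff `T ⧸ (f x)`
does, and local stability passes in both directions.
-/

open Ideal

section

variable {S T : Type*} [CommRing S] [CommRing T]

lemma span_singleton_sup_span_singleton_eq_top_iff {a b : S} :
    span {a} ⊔ span {b} = ⊤ ↔ IsCoprime a b := by
  rw [← isCoprime_iff_sup_eq, isCoprime_span_singleton_iff]

lemma hasStableRange1_iff :
    HasStableRange1 S ↔ ∀ a b : S, IsCoprime a b → ∃ y, IsUnit (a + b * y) := by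
  simp only [HasStableRange1, span_singleton_sup_span_singleton_eq_top_iff]

lemma locallyStable_iff :
    LocallyStable S ↔
      ∀ a b : S, IsCoprime a b → ∃ y, HasStableRange1 (S ⧸ span {a + b * y}) := by
  simp only [LocallyStable, span_singleton_sup_span_singleton_eq_top_iff]

lemma HasStableRange1.of_surjective (f : S →+* T) (hf : Function.Surjective f)
    (h : HasStableRange1 S) : HasStableRange1 T := by
  rw [hasStableRange1_iff] at h ⊢
  rintro a b ⟨u, v, huv⟩
  obtain ⟨a, rfl⟩ := hf a
  obtain ⟨u, rfl⟩ := hf u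
  -- `1 - u * a` is coprime to `a` and maps to a multiple of `b`.
  obtain ⟨y, hy⟩ := h a (1 - u * a) ⟨u, 1, by ring⟩
  refine ⟨v * f y, ?_⟩
  convert hy.map f using 1
  simp only [map_add, map_mul, map_sub, map_one]
  linear_combination f y * huv

lemma HasStableRange1.of_surjective_of_isLocalHom (f : S →+* T) [IsLocalHom f]
    (hf : Function.Surjective f) (h : HasStableRange1 T) : HasStableRange1 S := by
  rw [hasStableRange1_iff] at h ⊢
  intro a b hab
  obtain ⟨y, hy⟩ := h (f a) (f b) (hab.map f)
  obtain ⟨y, rfl⟩ := hf y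
  exact ⟨y, isUnit_of_map_unit f _ (by simpa using hy)⟩

lemma IsCoprime.of_map (f : S →+* T) [IsLocalHom f] (hf : Function.Surjective f) {a b : S}
    (h : IsCoprime (f a) (f b)) : IsCoprime a b := by
  obtain ⟨u, v, huv⟩ := h
  obtain ⟨u, rfl⟩ := hf u
  obtain ⟨v, rfl⟩ := hf v
  obtain ⟨w, hw⟩ : IsUnit (u * a + v * b) := isUnit_of_map_unit f _ (by simp [huv])
  exact ⟨↑w⁻¹ * u, ↑w⁻¹ * v, by linear_combination (-↑w⁻¹ : S) * hw + w.inv_mul⟩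

section KerLeJacobson

variable (f : S →+* T) (hf : Function.Surjective f) (hker : RingHom.ker f ≤ jacobson ⊥)
include hf hker

lemma isLocalHom_of_surjective_of_ker_le_jacobson : IsLocalHom f := by
  refine ⟨fun x ⟨u, hu⟩ => ?_⟩
  obtain ⟨v, hv⟩ := hf ↑u⁻¹
  have hmem : x * v - 1 ∈ RingHom.ker f := by simp [RingHom.mem_ker, hv, ← hu]
  exact isUnit_of_mul_isUnit_left (by simpa using mem_jacobson_bot.mp (hker hmem) 1)

lemma ker_quotientMap_map_le_jacobson (I : Ideal S) :
    RingHom.ker (quotientMap (I.map f) f le_comap_map) ≤ jacobson ⊥ := by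
  intro x hx
  obtain ⟨s, rfl⟩ := Ideal.Quotient.mk_surjective x
  rw [RingHom.mem_ker, quotientMap_mk, Ideal.Quotient.eq_zero_iff_mem,
    mem_map_iff_of_surjective f hf] at hx
  obtain ⟨i, hi, hfi⟩ := hx
  have hsi : s - i ∈ jacobson ⊥ := hker (by simp [RingHom.mem_ker, hfi])
  have hs : Ideal.Quotient.mk I s = Ideal.Quotient.mk I (s - i) := by
    simp [Ideal.Quotient.eq_zero_iff_mem.mpr hi]
  rw [hs, mem_jacobson_bot]
  intro w
  obtain ⟨w, rfl⟩ := Ideal.Quotient.mk_surjective w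
  simpa using (mem_jacobson_bot.mp hsi w).map (Ideal.Quotient.mk I)

lemma hasStableRange1_quotient_iff_map (I : Ideal S) :
    HasStableRange1 (S ⧸ I) ↔ HasStableRange1 (T ⧸ I.map f) := by
  have hψ := quotientMap_surjective (I := I.map f) (H := le_comap_map) hf
  have := isLocalHom_of_surjective_of_ker_le_jacobson _ hψ
    (ker_quotientMap_map_le_jacobson f hf hker I)
  exact ⟨.of_surjective _ hψ, .of_surjective_of_isLocalHom _ hψ⟩

lemma hasStableRange1_quotient_span_singleton_iff (x : S) :
    HasStableRange1 (S ⧸ span {x}) ↔ HasStableRange1 (T ⧸ span {f x}) := by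
  rw [hasStableRange1_quotient_iff_map f hf hker, map_span, Set.image_singleton]

theorem locallyStable_iff_of_surjective_of_ker_le_jacobson :
    LocallyStable S ↔ LocallyStable T := by
  have := isLocalHom_of_surjective_of_ker_le_jacobson f hf hker
  simp only [locallyStable_iff]
  constructor
  · intro hS a b hab
    obtain ⟨a, rfl⟩ := hf a
    obtain ⟨b, rfl⟩ := hf b
    obtain ⟨y, hy⟩ := hS a b (hab.of_map f hf)
    refine ⟨f y, ?_⟩
    rwa [hasStableRange1_quotient_span_singleton_iff f hf hker, map_add, map_mul] at hy
  · intro hT a b hab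
    obtain ⟨y, hy⟩ := hT (f a) (f b) (hab.map f)
    obtain ⟨y, rfl⟩ := hf y
    refine ⟨y, ?_⟩
    rwa [hasStableRange1_quotient_span_singleton_iff f hf hker, map_add, map_mul]

end KerLeJacobson

end

lemma PowerSeries.ker_constantCoeff_le_jacobson (R : Type*) [CommRing R] :
    RingHom.ker (constantCoeff (R := R)) ≤ jacobson ⊥ := by
  intro F hF
  rw [mem_jacobson_bot]
  intro G
  simp [isUnit_iff_constantCoeff, RingHom.mem_ker.mp hF]

theorem stmt4 (R : Type*) [CommRing R] :
    LocallyStable R ↔ LocallyStable (PowerSeries R) :=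
  (locallyStable_iff_of_surjective_of_ker_le_jacobson _ PowerSeries.constantCoeff_surj
    (PowerSeries.ker_constantCoeff_le_jacobson R)).symm
end

section
/- Every commutative locally stable ring has stable range 2: if aR + bR + cR = R, then there exist y,z ∈ R such that (a+cy)R + (b+cz)R = R. -/
lemma sup_span_eq_top_iff {R : Type*} [CommRing R] (a b : R) :
    Ideal.span {a} ⊔ Ideal.span {b} = ⊤ ↔ IsCoprime a b := by
  rw [← Ideal.isCoprime_span_singleton_iff, Ideal.isCoprime_iff_sup_eq]

theorem stmt7 (R : Type*) [CommRing R] (h : LocallyStable R) :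
    ∀ a b c : R, Ideal.span {a} ⊔ Ideal.span {b} ⊔ Ideal.span {c} = ⊤ →
      ∃ y z : R, Ideal.span {a + c * y} ⊔ Ideal.span {b + c * z} = ⊤ := by
  intro a b c habc
  rw [Ideal.eq_top_iff_one] at habc
  obtain ⟨x, hx, tc, htc, hx1⟩ := Submodule.mem_sup.mp habc
  obtain ⟨ra, hra, sb, hsb, hx2⟩ := Submodule.mem_sup.mp hx
  obtain ⟨r, hr⟩ := Ideal.mem_span_singleton'.mp hra
  obtain ⟨s, hs⟩ := Ideal.mem_span_singleton'.mp hsb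
  obtain ⟨t, ht⟩ := Ideal.mem_span_singleton'.mp htc
  have key : r * a + s * b + t * c = 1 := by
    rw [hr, hs, ht, hx2]; exact hx1
  have hcop : IsCoprime a (s * b + t * c) := ⟨r, 1, by linear_combination key⟩
  obtain ⟨y, hSR⟩ := h a (s * b + t * c) ((sup_span_eq_top_iff _ _).mpr hcop)
  set d := a + (s * b + t * c) * y with hd
  set mk := Ideal.Quotient.mk (Ideal.span {d}) with hmk
  have hbc : IsCoprime (mk b) (mk c) := by
    refine ⟨mk ((1 - r * y) * s), mk ((1 - r * y) * t), ?_⟩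
    have : mk ((1 - r * y) * s * b + (1 - r * y) * t * c) = mk 1 := by
      rw [Ideal.Quotient.mk_eq_mk_iff_sub_mem, Ideal.mem_span_singleton]
      exact ⟨-r, by linear_combination key⟩
    simpa using this
  obtain ⟨z', hz'⟩ := hSR (mk b) (mk c) ((sup_span_eq_top_iff _ _).mpr hbc)
  obtain ⟨z, rfl⟩ := Ideal.Quotient.mk_surjective z'
  obtain ⟨w, hw⟩ := hz'
  obtain ⟨u, hu⟩ := Ideal.Quotient.mk_surjective (↑w⁻¹ : R ⧸ Ideal.span {d})
  have hmul : mk ((b + c * z) * u) = mk 1 := by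
    have : (mk b + mk c * mk z) * mk u = 1 := by
      rw [← hw, hu]; exact w.mul_inv
    simpa [map_mul, map_add] using this
  rw [Ideal.Quotient.mk_eq_mk_iff_sub_mem, Ideal.mem_span_singleton] at hmul
  obtain ⟨v, hv⟩ := hmul
  refine ⟨y * (t - s * z), z, (sup_span_eq_top_iff _ _).mpr ?_⟩
  exact ⟨-v, u - v * y * s, by linear_combination hv⟩
end

section
/- The ring R = { a₀ + a₁x + a₂x² + ⋯ : a₀ ∈ ℤ, aᵢ ∈ ℚ for i ≥ 1 } (a subring of ℚ[[x]]) is locally stable but does not have almost stable range 1. -/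
/-- The ring of power series over `ℚ` with integer constant coefficient. -/
noncomputable def R17 : Subring (PowerSeries ℚ) :=
  ((Int.castRingHom ℚ).range).comap (PowerSeries.constantCoeff (R := ℚ))


/-!
Semilocal rings have stable range 1: by the Chinese remainder theorem, `y` can be chosen to be `1`
modulo the maximal ideals containing `a` and `0` modulo the others, so that `a + b * y` lies in no
maximal ideal.

Let `φ : R17 → ℤ` be the constant coefficient. If `φ f ≠ 0` then `f` is invertible in `ℚ[[x]]`,
so `f ∣ g` in `R17` exactly when `φ f ∣ φ g`; hence `R17 ⧸ (f) ≅ ℤ ⧸ (φ f)` is finite and has stable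
range 1. For coprime `a, b` the integers `φ a, φ b` are not both zero, so one of `a`, `a + b` is
such an `f`. On the other hand `R17 ⧸ ker φ ≅ ℤ` with `x ∈ ker φ`.
-/

open PowerSeries

lemma hasStableRange1_iff_isCoprime {R : Type*} [CommRing R] :
    HasStableRange1 R ↔ ∀ a b : R, IsCoprime a b → ∃ y, IsUnit (a + b * y) := by
  simp only [HasStableRange1, ← Ideal.isCoprime_iff_sup_eq, Ideal.isCoprime_span_singleton_iff]

lemma HasStableRange1.of_ringEquiv {R S : Type*} [CommRing R] [CommRing S] (e : R ≃+* S)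
    (h : HasStableRange1 R) : HasStableRange1 S := by
  rw [hasStableRange1_iff_isCoprime] at h ⊢
  intro a b hab
  obtain ⟨y, hy⟩ := h (e.symm a) (e.symm b) (hab.map e.symm.toRingHom)
  refine ⟨e y, ?_⟩
  simpa only [map_add, map_mul, RingEquiv.apply_symm_apply] using hy.map e

lemma hasStableRange1_of_finite_maximalSpectrum (R : Type*) [CommRing R]
    [Finite (MaximalSpectrum R)] : HasStableRange1 R := by
  classical
  rw [hasStableRange1_iff_isCoprime]
  intro a b hab
  have hpairwise : Pairwise fun m m' : MaximalSpectrum R ↦ IsCoprime m.asIdeal m'.asIdeal :=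
    fun m m' hne ↦ Ideal.isCoprime_iff_sup_eq.mpr <|
      m.isMaximal.coprime_of_ne m'.isMaximal (MaximalSpectrum.ext_iff.not.mp hne)
  obtain ⟨y, hy⟩ := Ideal.exists_forall_sub_mem_ideal hpairwise
    fun m ↦ if a ∈ m.asIdeal then 1 else 0
  refine ⟨y, by_contra fun hunit ↦ ?_⟩
  obtain ⟨M, hM, hmem⟩ := exists_max_ideal_of_mem_nonunits hunit
  have hyM := hy ⟨M, hM⟩
  by_cases haM : a ∈ M
  · have hbM : b ∈ M := by
      simp only [haM, if_true] at hyM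
      have := M.sub_mem (M.sub_mem hmem haM) (M.mul_mem_left b hyM)
      rwa [show a + b * y - a - b * (y - 1) = b by ring] at this
    obtain ⟨r, s, hrs⟩ := hab
    exact hM.ne_top <| (M.eq_top_iff_one).mpr <|
      hrs ▸ M.add_mem (M.mul_mem_left r haM) (M.mul_mem_left s hbM)
  · simp only [haM, if_false, sub_zero] at hyM
    exact haM <| by simpa using M.sub_mem hmem (M.mul_mem_left b hyM)

lemma ZMod.hasStableRange1 (n : ℕ) [NeZero n] : HasStableRange1 (ZMod n) :=
  hasStableRange1_of_finite_maximalSpectrum _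

lemma Int.not_hasStableRange1 : ¬ HasStableRange1 ℤ := by
  rw [hasStableRange1_iff_isCoprime]
  intro h
  obtain ⟨y, hy⟩ := h 2 5 ⟨3, -1, by norm_num⟩
  rw [Int.isUnit_iff] at hy
  omega

namespace R17

noncomputable def constantCoeff : R17 →+* ℤ :=
  (RingEquiv.ofLeftInverse (f := Int.castRingHom ℚ) Rat.num_intCast).symm.toRingHom.comp
    ((PowerSeries.constantCoeff (R := ℚ)).restrict R17 _ fun _ hf ↦ hf)

lemma intCast_constantCoeff (f : R17) :
    ((constantCoeff f : ℤ) : ℚ) = PowerSeries.constantCoeff (f : ℚ⟦X⟧) := by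
  obtain ⟨k, hk⟩ := f.2
  change ((Rat.num (PowerSeries.constantCoeff (f : ℚ⟦X⟧)) : ℤ) : ℚ) = _
  rw [← hk, Int.coe_castRingHom, Rat.num_intCast]

lemma constantCoeff_surjective : Function.Surjective constantCoeff :=
  fun n ↦ ⟨n, Int.cast_injective (α := ℚ) (by rw [intCast_constantCoeff]; simp)⟩

lemma dvd_iff_constantCoeff_dvd {f g : R17} (hf : constantCoeff f ≠ 0) :
    f ∣ g ↔ constantCoeff f ∣ constantCoeff g := by
  refine ⟨map_dvd constantCoeff, fun ⟨k, hk⟩ ↦ ?_⟩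
  have hf' : PowerSeries.constantCoeff (f : ℚ⟦X⟧) ≠ 0 := by
    rwa [← intCast_constantCoeff, Int.cast_ne_zero]
  refine ⟨⟨(f : ℚ⟦X⟧)⁻¹ * g, k, ?_⟩, Subtype.ext ?_⟩
  · rw [Int.coe_castRingHom, map_mul, PowerSeries.constantCoeff_inv, ← intCast_constantCoeff,
      ← intCast_constantCoeff, hk, Int.cast_mul]
    field_simp
  · change (g : ℚ⟦X⟧) = f * ((f : ℚ⟦X⟧)⁻¹ * g)
    rw [← mul_assoc, PowerSeries.mul_inv_cancel _ hf', one_mul]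

lemma span_singleton_eq_ker {f : R17} (hf : constantCoeff f ≠ 0) :
    Ideal.span {f} =
      RingHom.ker ((Int.castRingHom (ZMod (constantCoeff f).natAbs)).comp constantCoeff) := by
  ext g
  rw [Ideal.mem_span_singleton, dvd_iff_constantCoeff_dvd hf, RingHom.mem_ker,
    RingHom.comp_apply, eq_intCast, ZMod.intCast_zmod_eq_zero_iff_dvd, Int.natCast_natAbs,
    abs_dvd]

lemma hasStableRange1_quotient_span_singleton {f : R17} (hf : constantCoeff f ≠ 0) :
    HasStableRange1 (R17 ⧸ Ideal.span {f}) := by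
  have : NeZero (constantCoeff f).natAbs := ⟨Int.natAbs_ne_zero.mpr hf⟩
  refine (ZMod.hasStableRange1 _).of_ringEquiv
    ((Ideal.quotEquivOfEq (span_singleton_eq_ker hf)).trans
      (RingHom.quotientKerEquivOfSurjective ?_)).symm
  exact ZMod.intCast_surjective.comp constantCoeff_surjective

lemma locallyStable : LocallyStable R17 := by
  intro a b hab
  obtain ⟨r, s, hrs⟩ := (Ideal.isCoprime_span_singleton_iff a b).mp
    (Ideal.isCoprime_iff_sup_eq.mpr hab)
  by_cases ha : constantCoeff a = 0
  · have hb : constantCoeff b ≠ 0 := fun hb ↦ by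
      simpa [ha, hb] using congrArg constantCoeff hrs
    exact ⟨1, hasStableRange1_quotient_span_singleton (by simpa [ha] using hb)⟩
  · exact ⟨0, hasStableRange1_quotient_span_singleton (by simpa using ha)⟩

lemma ker_constantCoeff_ne_bot : RingHom.ker constantCoeff ≠ ⊥ := by
  have hX : (⟨X, 0, by simp⟩ : R17) ∈ RingHom.ker constantCoeff := by
    rw [RingHom.mem_ker, ← Int.cast_eq_zero (α := ℚ), intCast_constantCoeff]
    exact constantCoeff_X
  exact (Submodule.ne_bot_iff _).mpr ⟨_, hX, fun h ↦ X_ne_zero (congrArg Subtype.val h)⟩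

lemma not_almostStableRange1 : ¬ AlmostStableRange1 R17 := fun h ↦
  Int.not_hasStableRange1 <| (h _ ker_constantCoeff_ne_bot).of_ringEquiv
    (RingHom.quotientKerEquivOfSurjective constantCoeff_surjective)

end R17

theorem stmt17 : LocallyStable R17 ∧ ¬ AlmostStableRange1 R17 :=
  ⟨R17.locallyStable, R17.not_almostStableRange1⟩
end
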